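/- arXiv:2107.06091 — 5 statements merged into one kernel-verified Lean document; each statement's English description precedes it below -/
import Mathlib

section
/- Let n ≥ 1 and let S be a real symmetric positive definite n×n matrix with eigenpairs (λ_1,d_1),…,(λ_n,d_n) (eigenvalues listed with multiplicity, eigenvectors orthonormal) ranked in increasing ℓ-order, i.e. ℓ(λ_1) ≤ ⋯ ≤ ℓ(λ_n). Then for every 1 ≤ k ≤ n, the matrix Σ*_k = I_n + Σ_{i=1}^k (λ_i − 1) d_i d_iᵀ belongs to L_{n,k} and minimizes D' over L_{n,k}: for every Σ ∈ L_{n,k}, D'(Σ*_k) ≤ D'(Σ). -/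
open Matrix

noncomputable def ell (x : ℝ) : ℝ := Real.log x - x + 1

noncomputable def Dp {n : ℕ} (S A : Matrix (Fin n) (Fin n) ℝ) : ℝ :=
  Real.log A.det + (S * A⁻¹).trace

def Lnk (n k : ℕ) : Set (Matrix (Fin n) (Fin n) ℝ) :=
  {M | ∃ (α : Fin k → ℝ) (d : Fin k → Fin n → ℝ),
    (∀ i, 0 < α i) ∧ (∀ i j, d i ⬝ᵥ d j = if i = j then (1 : ℝ) else 0) ∧
    M = 1 + ∑ i, (α i - 1) • Matrix.vecMulVec (d i) (d i)}

/-!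
For `Σ = I + ∑ᵢ (αᵢ - 1) fᵢ fᵢᵀ` with orthonormal `fᵢ` one has `det Σ = ∏ αᵢ` and
`Σ⁻¹ = I + ∑ᵢ (αᵢ⁻¹ - 1) fᵢ fᵢᵀ`, hence `D'(Σ) = tr S + ∑ᵢ (log αᵢ + (αᵢ⁻¹ - 1) sᵢ)` with
`sᵢ = fᵢᵀ S fᵢ`. By `log x ≤ x - 1` each summand is at least `ℓ(sᵢ)`, with equality at `αᵢ = sᵢ`;
in particular `D'(Σ*_k) = tr S + ∑_{i ≤ k} ℓ(λᵢ)`.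

It remains to show `∑_{i ≤ k} ℓ(λᵢ) ≤ ∑ᵢ ℓ(sᵢ)`. Write `sᵢ = ∑ⱼ wᵢⱼ λⱼ` with `wᵢⱼ = (fᵢ ⬝ dⱼ)²`.
The rows of `w` sum to `1` (Parseval) and its columns to at most `1` (Bessel). Jensen's inequality
for the concave `ℓ` gives `ℓ(sᵢ) ≥ ∑ⱼ wᵢⱼ ℓ(λⱼ)`, and since the column sums lie in `[0, 1]` and add
up to `k`, the weighted sum `∑ⱼ (∑ᵢ wᵢⱼ) ℓ(λⱼ)` is at least the sum of the `k` smallest `ℓ(λⱼ)`.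
-/

open Finset

section Orthonormal

variable {ι n R : Type*} [Fintype n]

def IsOrthonormalFamily [CommRing R] [DecidableEq ι] (d : ι → n → R) : Prop :=
  ∀ i j, d i ⬝ᵥ d j = if i = j then 1 else 0

namespace IsOrthonormalFamily

variable [CommRing R]

lemma dotProduct_self [DecidableEq ι] {d : ι → n → R} (hd : IsOrthonormalFamily d) (i : ι) :
    d i ⬝ᵥ d i = 1 := by
  simpa using hd i i

lemma comp_injective {κ : Type*} [DecidableEq ι] [DecidableEq κ] {d : ι → n → R}
    (hd : IsOrthonormalFamily d) {e : κ → ι} (he : Function.Injective e) :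
    IsOrthonormalFamily (d ∘ e) := fun i j => by
  simp [hd (e i) (e j), he.eq_iff]

variable [DecidableEq n] {d : n → n → R}

lemma sum_dotProduct_smul (hd : IsOrthonormalFamily d) (v : n → R) :
    ∑ j, (v ⬝ᵥ d j) • d j = v := by
  have hDD : (of d)ᵀ * of d = 1 :=
    mul_eq_one_comm.mp (by ext i j; simpa [mul_apply, one_apply, dotProduct] using hd i j)
  calc ∑ j, (v ⬝ᵥ d j) • d j = (of d *ᵥ v) ᵥ* of d := by
        simp only [vecMul_eq_sum, mulVec, of_apply, dotProduct_comm]; rfl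
    _ = v := by rw [← mulVec_transpose, mulVec_mulVec, hDD, one_mulVec]

lemma sum_sq_dotProduct (hd : IsOrthonormalFamily d) (v : n → R) :
    ∑ j, (v ⬝ᵥ d j) ^ 2 = v ⬝ᵥ v := by
  calc ∑ j, (v ⬝ᵥ d j) ^ 2 = v ⬝ᵥ ∑ j, (v ⬝ᵥ d j) • d j := by
        simp [dotProduct_sum, sq]
    _ = v ⬝ᵥ v := by rw [hd.sum_dotProduct_smul]

lemma dotProduct_mulVec_eq_sum (hd : IsOrthonormalFamily d) {S : Matrix n n R} {lam : n → R}
    (heig : ∀ j, S *ᵥ d j = lam j • d j) (v : n → R) :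
    v ⬝ᵥ S *ᵥ v = ∑ j, lam j * (v ⬝ᵥ d j) ^ 2 := by
  have hSv : S *ᵥ v = ∑ j, (lam j * (v ⬝ᵥ d j)) • d j := by
    conv_lhs => rw [← hd.sum_dotProduct_smul v]
    simp [mulVec_sum, mulVec_smul, heig, smul_smul, mul_comm]
  simp [hSv, dotProduct_sum, dotProduct_smul, sq, mul_assoc]

end IsOrthonormalFamily

lemma IsOrthonormalFamily.sum_sq_dotProduct_le [DecidableEq ι] {f : ι → n → ℝ}
    (hf : IsOrthonormalFamily f) (g : n → ℝ) (s : Finset ι) :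
    ∑ i ∈ s, (f i ⬝ᵥ g) ^ 2 ≤ g ⬝ᵥ g := by
  have hon : Orthonormal ℝ fun i => (WithLp.toLp 2 (f i) : EuclideanSpace ℝ n) :=
    orthonormal_iff_ite.mpr fun i j => by
      simpa [EuclideanSpace.inner_toLp_toLp, dotProduct_comm] using hf i j
  have := hon.sum_inner_products_le (WithLp.toLp 2 g : EuclideanSpace ℝ n) (s := s)
  rw [← real_inner_self_eq_norm_sq] at this
  simpa only [EuclideanSpace.inner_toLp_toLp, star_trivial, Real.norm_eq_abs, sq_abs,
    dotProduct_comm g] using this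

end Orthonormal

section ScaleAlong

variable {ι n R : Type*} [Fintype ι] [DecidableEq n] [CommRing R]

def scaleAlong (α : ι → R) (d : ι → n → R) : Matrix n n R :=
  1 + ∑ i, (α i - 1) • vecMulVec (d i) (d i)

@[simp]
lemma scaleAlong_one (d : ι → n → R) : scaleAlong 1 d = 1 := by
  simp [scaleAlong]

variable [Fintype n]

lemma trace_mul_scaleAlong (S : Matrix n n R) (α : ι → R) (d : ι → n → R) :
    (S * scaleAlong α d).trace = S.trace + ∑ i, (α i - 1) * (d i ⬝ᵥ S *ᵥ d i) := by
  simp [scaleAlong, mul_add, mul_sum, trace_sum, mul_vecMulVec, dotProduct_comm]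

namespace IsOrthonormalFamily

variable [DecidableEq ι] {d : ι → n → R}

lemma sum_smul_vecMulVec_mul_sum (hd : IsOrthonormalFamily d) (a b : ι → R) :
    (∑ i, a i • vecMulVec (d i) (d i)) * (∑ i, b i • vecMulVec (d i) (d i)) =
      ∑ i, (a i * b i) • vecMulVec (d i) (d i) := by
  simp [sum_mul_sum, vecMulVec_mul_vecMulVec, hd _ _, apply_ite, smul_smul, mul_comm]

lemma scaleAlong_mul (hd : IsOrthonormalFamily d) (α β : ι → R) :
    scaleAlong α d * scaleAlong β d = scaleAlong (α * β) d := by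
  have hcoef : ∀ i, (α i - 1) + (β i - 1) + (α i - 1) * (β i - 1) = α i * β i - 1 :=
    fun i => by ring
  simp only [scaleAlong, add_mul, mul_add, one_mul, mul_one, hd.sum_smul_vecMulVec_mul_sum,
    Pi.mul_apply, ← hcoef, add_smul, sum_add_distrib]
  abel

def scaleAlongHom (hd : IsOrthonormalFamily d) : (ι → R) →* Matrix n n R where
  toFun α := scaleAlong α d
  map_one' := scaleAlong_one d
  map_mul' α β := (hd.scaleAlong_mul α β).symm

lemma det_scaleAlong (hd : IsOrthonormalFamily d) (α : ι → R) :
    (scaleAlong α d).det = ∏ i, α i := by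
  have hsingle : ∀ i a, (scaleAlong (Pi.mulSingle i a) d).det = a := fun i a => by
    have : scaleAlong (Pi.mulSingle i a) d = 1 + vecMulVec ((a - 1) • d i) (d i) := by
      rw [scaleAlong, sum_eq_single i (fun j _ hj => by simp [Pi.mulSingle_eq_of_ne hj]) (by simp)]
      ext
      simp [vecMulVec_apply]
    rw [this, vecMulVec_eq Unit, det_one_add_replicateCol_mul_replicateRow, dotProduct_smul,
      hd.dotProduct_self]
    simp
  calc (scaleAlong α d).det
      = (detMonoidHom.comp hd.scaleAlongHom) (∏ i, Pi.mulSingle i (α i)) := by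
        rw [univ_prod_mulSingle]; rfl
    _ = ∏ i, α i := by rw [map_prod]; exact prod_congr rfl fun i _ => hsingle i (α i)

end IsOrthonormalFamily

lemma IsOrthonormalFamily.inv_scaleAlong {K : Type*} [Field K] [DecidableEq ι] {d : ι → n → K}
    (hd : IsOrthonormalFamily d) {α : ι → K} (hα : ∀ i, α i ≠ 0) :
    (scaleAlong α d)⁻¹ = scaleAlong α⁻¹ d :=
  inv_eq_right_inv <| by
    rw [hd.scaleAlong_mul, show α * α⁻¹ = 1 from funext fun i => mul_inv_cancel₀ (hα i),
      scaleAlong_one]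

end ScaleAlong

lemma Matrix.PosDef.pos_of_mulVec_eq_smul {n : Type*} [Fintype n] {S : Matrix n n ℝ}
    (hS : S.PosDef) {v : n → ℝ} (hv : v ≠ 0) {μ : ℝ} (h : S *ᵥ v = μ • v) : 0 < μ := by
  have hpos := hS.dotProduct_mulVec_pos hv
  rw [star_trivial, h, dotProduct_smul, smul_eq_mul] at hpos
  exact pos_of_mul_pos_left hpos (dotProduct_self_star_nonneg v)

lemma concaveOn_ell : ConcaveOn ℝ (Set.Ioi 0) ell := by
  have hell : ell = Real.log - id + fun _ => 1 := by
    funext x; simp [ell, sub_eq_add_neg]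
  rw [hell]
  exact (strictConcaveOn_log_Ioi.concaveOn.sub (convexOn_id (convex_Ioi 0))).add_const 1

lemma ell_le_log_add_inv_sub_one_mul {s α : ℝ} (hs : 0 < s) (hα : 0 < α) :
    ell s ≤ Real.log α + (α⁻¹ - 1) * s := by
  have h := Real.log_le_sub_one_of_pos (div_pos hs hα)
  rw [Real.log_div hs.ne' hα.ne', div_eq_inv_mul] at h
  rw [ell]
  linarith

lemma log_add_inv_sub_one_mul_self {s : ℝ} (hs : s ≠ 0) :
    Real.log s + (s⁻¹ - 1) * s = ell s := by
  rw [ell, sub_one_mul, inv_mul_cancel₀ hs]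
  ring

section Dp

variable {ι : Type*} [Fintype ι] [DecidableEq ι] {m : ℕ} {S : Matrix (Fin m) (Fin m) ℝ}

lemma Dp_scaleAlong {α : ι → ℝ} {d : ι → Fin m → ℝ} (hα : ∀ i, 0 < α i)
    (hd : IsOrthonormalFamily d) :
    Dp S (scaleAlong α d) =
      S.trace + ∑ i, (Real.log (α i) + ((α i)⁻¹ - 1) * (d i ⬝ᵥ S *ᵥ d i)) := by
  rw [Dp, hd.det_scaleAlong, hd.inv_scaleAlong fun i => (hα i).ne', trace_mul_scaleAlong,
    Real.log_prod fun i _ => (hα i).ne', sum_add_distrib]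
  simp only [Pi.inv_apply]
  ring

lemma trace_add_sum_ell_le_Dp_scaleAlong (hS : S.PosDef) {α : ι → ℝ} {d : ι → Fin m → ℝ}
    (hα : ∀ i, 0 < α i) (hd : IsOrthonormalFamily d) :
    S.trace + ∑ i, ell (d i ⬝ᵥ S *ᵥ d i) ≤ Dp S (scaleAlong α d) := by
  rw [Dp_scaleAlong hα hd]
  gcongr with i
  have hdi : d i ≠ 0 := fun h => by simpa [h] using hd.dotProduct_self i
  have := hS.dotProduct_mulVec_pos hdi
  rw [star_trivial] at this
  exact ell_le_log_add_inv_sub_one_mul this (hα i)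

lemma Dp_scaleAlong_of_mulVec_eq_smul {lam : ι → ℝ} {d : ι → Fin m → ℝ}
    (hlam : ∀ i, 0 < lam i) (hd : IsOrthonormalFamily d) (heig : ∀ i, S *ᵥ d i = lam i • d i) :
    Dp S (scaleAlong lam d) = S.trace + ∑ i, ell (lam i) := by
  rw [Dp_scaleAlong hlam hd]
  congr 1
  refine sum_congr rfl fun i _ => ?_
  rw [heig, dotProduct_smul, hd.dotProduct_self, smul_eq_mul, mul_one,
    log_add_inv_sub_one_mul_self (hlam i).ne']

end Dp

lemma sum_le_sum_mul_of_le_of_notMem {ι : Type*} [Fintype ι] [DecidableEq ι] {v c : ι → ℝ}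
    (T : Finset ι) (hT : ∀ j ∈ T, ∀ l ∉ T, v j ≤ v l) (hc0 : ∀ j, 0 ≤ c j) (hc1 : ∀ j, c j ≤ 1)
    (hc : ∑ j, c j = #T) :
    ∑ j ∈ T, v j ≤ ∑ j, c j * v j := by
  obtain ⟨t, hlo, hhi⟩ : ∃ t, (∀ j ∈ T, v j ≤ t) ∧ ∀ l ∉ T, t ≤ v l := by
    rcases T.eq_empty_or_nonempty with rfl | hne
    · obtain ⟨t, ht⟩ := (Set.finite_range v).bddBelow
      exact ⟨t, by simp, fun l _ => ht (Set.mem_range_self l)⟩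
    · exact ⟨T.sup' hne v, fun j hj => le_sup' v hj,
        fun l hl => sup'_le hne v fun j hj => hT j hj l hl⟩
  have hterm : ∀ j, ((if j ∈ T then 1 else 0) - c j) * v j ≤
      ((if j ∈ T then 1 else 0) - c j) * t := by
    intro j
    split_ifs with hj
    · exact mul_le_mul_of_nonneg_left (hlo j hj) (sub_nonneg.2 (hc1 j))
    · nlinarith [hhi j hj, hc0 j]
  have hsum := sum_le_sum fun j (_ : j ∈ univ) => hterm j
  simp only [sub_mul, sum_sub_distrib, ← sum_mul, ite_mul, one_mul, zero_mul, sum_ite_mem,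
    univ_inter, hc, sum_const, nsmul_eq_mul, sub_self] at hsum
  linarith

lemma sum_ell_castLE_le_sum_ell {m k : ℕ} (hkm : k ≤ m) {S : Matrix (Fin m) (Fin m) ℝ}
    {lam : Fin m → ℝ} {d : Fin m → Fin m → ℝ} (hd : IsOrthonormalFamily d)
    (heig : ∀ j, S *ᵥ d j = lam j • d j) (hlam : ∀ j, 0 < lam j) (hmono : Monotone (ell ∘ lam))
    {f : Fin k → Fin m → ℝ} (hf : IsOrthonormalFamily f) :
    ∑ i : Fin k, ell (lam (Fin.castLE hkm i)) ≤ ∑ i, ell (f i ⬝ᵥ S *ᵥ f i) := by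
  set w : Fin k → Fin m → ℝ := fun i j => (f i ⬝ᵥ d j) ^ 2
  have hrow : ∀ i, ∑ j, w i j = 1 := fun i => by
    simp [w, hd.sum_sq_dotProduct, hf.dotProduct_self]
  have hinit : ∀ j ∈ univ.map (Fin.castLEEmb hkm), ∀ l ∉ univ.map (Fin.castLEEmb hkm),
      ell (lam j) ≤ ell (lam l) := by
    simp only [mem_map, mem_univ, true_and, Fin.castLEEmb_apply]
    rintro _ ⟨i, rfl⟩ l hl
    have hkl : k ≤ l := by
      by_contra! hlk
      exact hl ⟨⟨l, hlk⟩, rfl⟩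
    exact hmono (Fin.le_def.2 (by simp only [Fin.val_castLE]; omega))
  calc ∑ i : Fin k, ell (lam (Fin.castLE hkm i))
      = ∑ j ∈ univ.map (Fin.castLEEmb hkm), ell (lam j) := by rw [sum_map]; rfl
    _ ≤ ∑ j, (∑ i, w i j) * ell (lam j) :=
        sum_le_sum_mul_of_le_of_notMem _ hinit (fun j => sum_nonneg fun i _ => sq_nonneg _)
          (fun j => by simpa [hd.dotProduct_self] using hf.sum_sq_dotProduct_le (d j) univ)
          (by rw [sum_comm]; simp [hrow])
    _ = ∑ i, ∑ j, w i j * ell (lam j) := by simp_rw [sum_mul]; exact sum_comm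
    _ ≤ ∑ i, ell (∑ j, w i j * lam j) := sum_le_sum fun i _ =>
        concaveOn_ell.le_map_sum (fun j _ => sq_nonneg _) (hrow i) (fun j _ => hlam j)
    _ = ∑ i, ell (f i ⬝ᵥ S *ᵥ f i) := by simp [w, hd.dotProduct_mulVec_eq_sum heig, mul_comm]

theorem stmt_0_general {n : ℕ} (S : Matrix (Fin n) (Fin n) ℝ) (hS : S.PosDef)
    (lam : Fin n → ℝ) (d : Fin n → Fin n → ℝ)
    (heig : ∀ i, S *ᵥ d i = lam i • d i)
    (horth : ∀ i j, d i ⬝ᵥ d j = if i = j then (1 : ℝ) else 0)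
    (hord : ∀ i j : Fin n, i ≤ j → ell (lam i) ≤ ell (lam j))
    (k : ℕ) (hkn : k ≤ n) :
    (1 + ∑ i : Fin k, (lam (Fin.castLE hkn i) - 1) •
        Matrix.vecMulVec (d (Fin.castLE hkn i)) (d (Fin.castLE hkn i))) ∈ Lnk n k ∧
    ∀ M ∈ Lnk n k,
      Dp S (1 + ∑ i : Fin k, (lam (Fin.castLE hkn i) - 1) •
        Matrix.vecMulVec (d (Fin.castLE hkn i)) (d (Fin.castLE hkn i))) ≤ Dp S M := by
  have hd : IsOrthonormalFamily d := horth
  have hlam : ∀ j, 0 < lam j := fun j =>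
    hS.pos_of_mulVec_eq_smul (fun h => by simpa [h] using hd.dotProduct_self j) (heig j)
  have hdk := hd.comp_injective (Fin.castLE_injective hkn)
  refine ⟨⟨_, _, fun i => hlam _, hdk, rfl⟩, ?_⟩
  rintro M ⟨β, f, hβ, hf, rfl⟩
  calc Dp S (scaleAlong (lam ∘ Fin.castLE hkn) (d ∘ Fin.castLE hkn))
      = S.trace + ∑ i : Fin k, ell (lam (Fin.castLE hkn i)) :=
        Dp_scaleAlong_of_mulVec_eq_smul (fun i => hlam _) hdk (fun i => heig _)
    _ ≤ S.trace + ∑ i, ell (f i ⬝ᵥ S *ᵥ f i) := by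
        gcongr S.trace + ?_
        exact sum_ell_castLE_le_sum_ell hkn hd heig hlam (fun i j => hord i j) hf
    _ ≤ Dp S (scaleAlong β f) := trace_add_sum_ell_le_Dp_scaleAlong hS hβ hf

theorem stmt_0 {n : ℕ} (hn : 1 ≤ n) (S : Matrix (Fin n) (Fin n) ℝ) (hS : S.PosDef)
    (lam : Fin n → ℝ) (d : Fin n → Fin n → ℝ)
    (heig : ∀ i, S *ᵥ d i = lam i • d i)
    (horth : ∀ i j, d i ⬝ᵥ d j = if i = j then (1 : ℝ) else 0)
    (hord : ∀ i j : Fin n, i ≤ j → ell (lam i) ≤ ell (lam j))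
    (k : ℕ) (hk1 : 1 ≤ k) (hkn : k ≤ n) :
    (1 + ∑ i : Fin k, (lam (Fin.castLE hkn i) - 1) •
        Matrix.vecMulVec (d (Fin.castLE hkn i)) (d (Fin.castLE hkn i))) ∈ Lnk n k ∧
    ∀ M ∈ Lnk n k,
      Dp S (1 + ∑ i : Fin k, (lam (Fin.castLE hkn i) - 1) •
        Matrix.vecMulVec (d (Fin.castLE hkn i)) (d (Fin.castLE hkn i))) ≤ Dp S M :=
  stmt_0_general S hS lam d heig horth hord k hkn
end

section
/- Let S be a real symmetric positive definite n×n matrix, let d_1,…,d_k ∈ ℝ^n be orthonormal vectors, let v_1,…,v_k > 0, and set Σ = I_n + Σ_{i=1}^k (v_i − 1) d_i d_iᵀ. Then D'(Σ) = Σ_{i=1}^k [ log(v_i) + (1/v_i − 1) d_iᵀ S d_i ] + tr(S). -/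
/-!
Let `D` be the matrix whose rows are the `d i`; orthonormality says `D * Dᵀ = 1`, and
`Σ = 1 + Dᵀ * diagonal (v - 1) * D`. Because `D * Dᵀ = 1`, matrices of this shape multiply like
their diagonals, so `Σ⁻¹` is the same expression with `v⁻¹` in place of `v`. Sylvester's identity
`det (1 + A * B) = det (1 + B * A)` reduces `det Σ` to `det (diagonal v) = ∏ i, v i`, and the trace
of `S * Σ⁻¹` splits into `tr S` plus the contributions of the rank-one terms.
-/

open Matrix

namespace Matrix

variable {m ι R : Type*}

theorem of_mul_transpose_of_eq_one_iff [Fintype m] [DecidableEq ι] [CommSemiring R]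
    (d : ι → m → R) :
    of d * (of d)ᵀ = 1 ↔ ∀ i j, d i ⬝ᵥ d j = if i = j then 1 else 0 := by
  simp [← Matrix.ext_iff, mul_apply, dotProduct, one_apply]

variable [Fintype ι] [DecidableEq ι]

theorem sum_smul_vecMulVec_self [CommSemiring R] (d : ι → m → R) (c : ι → R) :
    ∑ i, c i • vecMulVec (d i) (d i) = (of d)ᵀ * diagonal c * of d := by
  ext a b
  simp [Matrix.sum_apply, mul_apply, vecMulVec_apply, diagonal_apply, mul_comm, mul_left_comm]

theorem trace_mul_transpose_mul_diagonal_mul [Fintype m] [CommSemiring R] (S : Matrix m m R)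
    (D : Matrix ι m R) (c : ι → R) :
    (S * (Dᵀ * diagonal c * D)).trace = ∑ i, c i * (D i ⬝ᵥ S *ᵥ D i) := by
  rw [trace_mul_comm, Matrix.mul_assoc, Matrix.mul_assoc, trace_mul_comm, Matrix.mul_assoc]
  simp only [trace, diag, diagonal_mul]
  congr! 2 with i
  simp only [mul_apply, transpose_apply, dotProduct, mulVec, Finset.sum_mul, Finset.mul_sum]
  rw [Finset.sum_comm]
  exact Finset.sum_congr rfl fun _ _ => Finset.sum_congr rfl fun _ _ => by ring

variable [Fintype m] [DecidableEq m] {D : Matrix ι m R}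

theorem one_add_transpose_mul_diagonal_sub_one_mul_mul [CommRing R] (hD : D * Dᵀ = 1)
    (a b : ι → R) :
    (1 + Dᵀ * diagonal (a - 1) * D) * (1 + Dᵀ * diagonal (b - 1) * D) =
      1 + Dᵀ * diagonal (a * b - 1) * D := by
  have hsq : Dᵀ * diagonal (a - 1) * D * (Dᵀ * diagonal (b - 1) * D) =
      Dᵀ * diagonal ((a - 1) * (b - 1)) * D :=
    calc Dᵀ * diagonal (a - 1) * D * (Dᵀ * diagonal (b - 1) * D)
        = Dᵀ * diagonal (a - 1) * (D * Dᵀ) * diagonal (b - 1) * D := by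
          simp only [Matrix.mul_assoc]
      _ = Dᵀ * diagonal ((a - 1) * (b - 1)) * D := by
        rw [hD, Matrix.mul_one, Matrix.mul_assoc Dᵀ, diagonal_mul_diagonal]; rfl
  have hdiag : diagonal (a * b - 1) =
      diagonal (a - 1) + diagonal (b - 1) + diagonal ((a - 1) * (b - 1)) := by
    rw [diagonal_add, diagonal_add]; congr 1; ext i
    simp only [Pi.sub_apply, Pi.mul_apply, Pi.one_apply]; ring
  rw [hdiag]
  simp only [Matrix.mul_add, Matrix.add_mul, Matrix.one_mul, Matrix.mul_one, hsq]
  abel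

theorem det_one_add_transpose_mul_diagonal_sub_one_mul [CommRing R] (hD : D * Dᵀ = 1)
    (a : ι → R) : (1 + Dᵀ * diagonal (a - 1) * D).det = ∏ i, a i := by
  rw [Matrix.mul_assoc, det_one_add_mul_comm, Matrix.mul_assoc, hD, Matrix.mul_one,
    ← diagonal_one, diagonal_add, det_diagonal]
  simp

theorem inv_one_add_transpose_mul_diagonal_sub_one_mul [Field R] (hD : D * Dᵀ = 1)
    {a : ι → R} (ha : ∀ i, a i ≠ 0) :
    (1 + Dᵀ * diagonal (a - 1) * D)⁻¹ = 1 + Dᵀ * diagonal (a⁻¹ - 1) * D := by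
  have hmul : a * a⁻¹ = 1 := funext fun i => mul_inv_cancel₀ (ha i)
  refine inv_eq_right_inv ?_
  rw [one_add_transpose_mul_diagonal_sub_one_mul_mul hD, hmul, sub_self]
  simp

end Matrix

theorem stmt_9_general {n k : ℕ} (S : Matrix (Fin n) (Fin n) ℝ)
    (d : Fin k → Fin n → ℝ)
    (horth : ∀ i j, d i ⬝ᵥ d j = if i = j then (1 : ℝ) else 0)
    (v : Fin k → ℝ) (hv : ∀ i, 0 < v i) :
    Dp S (1 + ∑ i, (v i - 1) • Matrix.vecMulVec (d i) (d i)) =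
      (∑ i, (Real.log (v i) + ((v i)⁻¹ - 1) * (d i ⬝ᵥ S *ᵥ d i))) + S.trace := by
  have hD := (of_mul_transpose_of_eq_one_iff d).2 horth
  have hv₀ : ∀ i, v i ≠ 0 := fun i => (hv i).ne'
  have hA : ∑ i, (v i - 1) • vecMulVec (d i) (d i) = (of d)ᵀ * diagonal (v - 1) * of d :=
    sum_smul_vecMulVec_self d (v - 1)
  rw [hA, Dp, det_one_add_transpose_mul_diagonal_sub_one_mul hD,
    inv_one_add_transpose_mul_diagonal_sub_one_mul hD hv₀, Real.log_prod fun i _ => hv₀ i,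
    Matrix.mul_add, Matrix.mul_one, trace_add, trace_mul_transpose_mul_diagonal_mul,
    Finset.sum_add_distrib, add_comm S.trace, ← add_assoc]
  rfl

theorem stmt_9 {n k : ℕ} (S : Matrix (Fin n) (Fin n) ℝ) (hS : S.PosDef)
    (d : Fin k → Fin n → ℝ)
    (horth : ∀ i j, d i ⬝ᵥ d j = if i = j then (1 : ℝ) else 0)
    (v : Fin k → ℝ) (hv : ∀ i, 0 < v i) :
    Dp S (1 + ∑ i, (v i - 1) • Matrix.vecMulVec (d i) (d i)) =
      (∑ i, (Real.log (v i) + ((v i)⁻¹ - 1) * (d i ⬝ᵥ S *ᵥ d i))) + S.trace :=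
  stmt_9_general S d horth v hv
end

section
/- Let S be a real symmetric positive definite n×n matrix and let d_1,…,d_k ∈ ℝ^n be orthonormal vectors. For v = (v_1,…,v_k) ∈ (0,∞)^k set Σ(v) = I_n + Σ_{i=1}^k (v_i − 1) d_i d_iᵀ. Then for every v ∈ (0,∞)^k, D'(Σ(v)) ≥ Σ_{i=1}^k ℓ(d_iᵀ S d_i) + tr(S), with equality if and only if v_i = d_iᵀ S d_i for every i = 1,…,k. -/
/-!
On the span of the orthonormal vectors `dᵢ` the matrix `Σ(v)` acts diagonally with eigenvalues
`vᵢ`, and as the identity on the orthogonal complement. Hence `det Σ(v) = ∏ vᵢ` and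
`Σ(v)⁻¹ = Σ(v⁻¹)`, so with `qᵢ = dᵢᵀ S dᵢ`
`D'(Σ(v)) = tr S + ∑ (log vᵢ + (vᵢ⁻¹ - 1) qᵢ) = ∑ ℓ(qᵢ) + tr S - ∑ ℓ(qᵢ / vᵢ)`.
Since `ℓ ≤ 0` on `(0, ∞)` and vanishes only at `1`, both claims follow.
-/

open Matrix

open Finset

namespace Matrix

variable {m R : Type*} [Fintype m] [CommRing R]

theorem trace_mul_vecMulVec (S : Matrix m m R) (u w : m → R) :
    (S * vecMulVec u w).trace = w ⬝ᵥ S *ᵥ u := by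
  rw [mul_vecMulVec, trace_vecMulVec, dotProduct_comm]

theorem det_one_add_vecMulVec [DecidableEq m] (u w : m → R) :
    (1 + vecMulVec u w).det = 1 + w ⬝ᵥ u := by
  rw [vecMulVec_eq Unit, det_one_add_replicateCol_mul_replicateRow]

end Matrix

section SpectralUpdate

variable {ι m R : Type*} [Fintype m] [DecidableEq m] [CommRing R]

/-- `spectralUpdate d univ v` is the paper's `Σ(v)`; general `s` allows induction on the set of
directions. -/
def spectralUpdate (d : ι → m → R) (s : Finset ι) (v : ι → R) : Matrix m m R :=
  1 + ∑ i ∈ s, (v i - 1) • vecMulVec (d i) (d i)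

variable {d : ι → m → R}

theorem trace_mul_spectralUpdate (S : Matrix m m R) (s : Finset ι) (v : ι → R) :
    (S * spectralUpdate d s v).trace = S.trace + ∑ i ∈ s, (v i - 1) * (d i ⬝ᵥ S *ᵥ d i) := by
  simp only [spectralUpdate, mul_add, mul_one, mul_sum, mul_smul_comm, trace_add, trace_sum,
    trace_smul, trace_mul_vecMulVec, smul_eq_mul]

variable [DecidableEq ι]

theorem sum_smul_vecMulVec_mul_sum (hd : ∀ i j, d i ⬝ᵥ d j = if i = j then 1 else 0)
    (s t : Finset ι) (a b : ι → R) :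
    (∑ i ∈ s, a i • vecMulVec (d i) (d i)) * (∑ j ∈ t, b j • vecMulVec (d j) (d j)) =
      ∑ i ∈ s ∩ t, (a i * b i) • vecMulVec (d i) (d i) := by
  have hterm : ∀ i j, a i • vecMulVec (d i) (d i) * b j • vecMulVec (d j) (d j) =
      if i = j then (a i * b i) • vecMulVec (d i) (d i) else 0 := by
    intro i j
    rw [smul_mul_smul_comm, vecMulVec_mul_vecMulVec, hd]
    split_ifs with h
    · subst h; rw [one_smul]
    · rw [zero_smul, vecMulVec_zero, smul_zero]
  simp only [sum_mul_sum, hterm, sum_ite_eq, sum_ite_mem]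

theorem spectralUpdate_mul (hd : ∀ i j, d i ⬝ᵥ d j = if i = j then 1 else 0)
    (s : Finset ι) (u w : ι → R) :
    spectralUpdate d s u * spectralUpdate d s w = spectralUpdate d s (u * w) := by
  simp only [spectralUpdate, add_mul, mul_add, one_mul, mul_one,
    sum_smul_vecMulVec_mul_sum hd, inter_self, add_assoc, ← sum_add_distrib, ← add_smul]
  refine congrArg (1 + ·) (sum_congr rfl fun i _ => ?_)
  rw [Pi.mul_apply]
  congr 1
  ring

theorem spectralUpdate_insert (hd : ∀ i j, d i ⬝ᵥ d j = if i = j then 1 else 0)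
    {s : Finset ι} {a : ι} (ha : a ∉ s) (v : ι → R) :
    spectralUpdate d (insert a s) v = spectralUpdate d s v * spectralUpdate d {a} v := by
  have hcross := sum_smul_vecMulVec_mul_sum hd s {a} (fun i => v i - 1) (fun i => v i - 1)
  rw [disjoint_iff_inter_eq_empty.mp (disjoint_singleton_right.mpr ha), sum_empty] at hcross
  simp only [spectralUpdate, add_mul, mul_add, one_mul, mul_one, hcross, sum_insert ha]
  rw [sum_singleton]
  abel

theorem det_spectralUpdate (hd : ∀ i j, d i ⬝ᵥ d j = if i = j then 1 else 0)
    (s : Finset ι) (v : ι → R) : (spectralUpdate d s v).det = ∏ i ∈ s, v i := by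
  induction s using Finset.induction with
  | empty => simp [spectralUpdate]
  | insert a s ha ih =>
    have hsingle : (spectralUpdate d {a} v).det = v a := by
      rw [spectralUpdate, sum_singleton, ← smul_vecMulVec, det_one_add_vecMulVec,
        dotProduct_smul, hd, if_pos rfl, smul_eq_mul, mul_one, add_sub_cancel]
    rw [spectralUpdate_insert hd ha, det_mul, ih, hsingle, prod_insert ha, mul_comm]

theorem inv_spectralUpdate {K : Type*} [Field K] {d : ι → m → K}
    (hd : ∀ i j, d i ⬝ᵥ d j = if i = j then 1 else 0) {s : Finset ι} {v : ι → K}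
    (hv : ∀ i ∈ s, v i ≠ 0) : (spectralUpdate d s v)⁻¹ = spectralUpdate d s v⁻¹ := by
  refine inv_eq_right_inv ?_
  rw [spectralUpdate_mul hd, spectralUpdate, sum_eq_zero fun i hi => ?_, add_zero]
  rw [Pi.mul_apply, Pi.inv_apply, mul_inv_cancel₀ (hv i hi), sub_self, zero_smul]

end SpectralUpdate

theorem ell_nonpos {x : ℝ} (hx : 0 < x) : ell x ≤ 0 := by
  have := Real.log_le_sub_one_of_pos hx
  unfold ell
  linarith

theorem ell_eq_zero_iff {x : ℝ} (hx : 0 < x) : ell x = 0 ↔ x = 1 := by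
  refine ⟨fun h => by_contra fun hne => ?_, fun h => by simp [ell, h]⟩
  have := Real.log_lt_sub_one_of_pos hx hne
  unfold ell at h
  linarith

theorem log_add_inv_sub_one_mul {q v : ℝ} (hq : 0 < q) (hv : 0 < v) :
    Real.log v + (v⁻¹ - 1) * q = ell q - ell (q / v) := by
  rw [ell, ell, Real.log_div hq.ne' hv.ne']
  ring

theorem Dp_spectralUpdate {ι : Type*} [DecidableEq ι] {n : ℕ} (S : Matrix (Fin n) (Fin n) ℝ)
    {d : ι → Fin n → ℝ} (hd : ∀ i j, d i ⬝ᵥ d j = if i = j then 1 else 0) {s : Finset ι}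
    {v : ι → ℝ} (hq : ∀ i ∈ s, 0 < d i ⬝ᵥ S *ᵥ d i) (hv : ∀ i ∈ s, 0 < v i) :
    Dp S (spectralUpdate d s v) =
      (∑ i ∈ s, ell (d i ⬝ᵥ S *ᵥ d i)) + S.trace - ∑ i ∈ s, ell ((d i ⬝ᵥ S *ᵥ d i) / v i) := by
  rw [Dp, inv_spectralUpdate hd fun i hi => (hv i hi).ne', det_spectralUpdate hd,
    trace_mul_spectralUpdate, Real.log_prod fun i hi => (hv i hi).ne']
  have hterm : ∀ i ∈ s, Real.log (v i) + ((v⁻¹) i - 1) * (d i ⬝ᵥ S *ᵥ d i) =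
      ell (d i ⬝ᵥ S *ᵥ d i) - ell ((d i ⬝ᵥ S *ᵥ d i) / v i) :=
    fun i hi => log_add_inv_sub_one_mul (hq i hi) (hv i hi)
  have hsum := sum_congr rfl hterm
  rw [sum_add_distrib, sum_sub_distrib] at hsum
  linarith

theorem stmt_11 {n k : ℕ} (S : Matrix (Fin n) (Fin n) ℝ) (hS : S.PosDef)
    (d : Fin k → Fin n → ℝ)
    (horth : ∀ i j, d i ⬝ᵥ d j = if i = j then (1 : ℝ) else 0)
    (v : Fin k → ℝ) (hv : ∀ i, 0 < v i) :
    (∑ i, ell (d i ⬝ᵥ S *ᵥ d i)) + S.trace ≤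
      Dp S (1 + ∑ i, (v i - 1) • Matrix.vecMulVec (d i) (d i)) ∧
    (Dp S (1 + ∑ i, (v i - 1) • Matrix.vecMulVec (d i) (d i)) =
        (∑ i, ell (d i ⬝ᵥ S *ᵥ d i)) + S.trace ↔ ∀ i, v i = d i ⬝ᵥ S *ᵥ d i) := by
  have hq : ∀ i, 0 < d i ⬝ᵥ S *ᵥ d i := fun i =>
    hS.dotProduct_mulVec_pos fun h0 => by simpa [h0] using horth i i
  have hD : Dp S (spectralUpdate d univ v) = _ :=
    Dp_spectralUpdate S horth (fun i _ => hq i) (fun i _ => hv i)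
  have hgap : ∀ i ∈ univ, ell ((d i ⬝ᵥ S *ᵥ d i) / v i) ≤ 0 :=
    fun i _ => ell_nonpos (div_pos (hq i) (hv i))
  refine ⟨?_, ?_⟩
  · rw [spectralUpdate] at hD
    linarith [sum_nonpos hgap]
  · rw [← spectralUpdate, hD, sub_eq_self, sum_eq_zero_iff_of_nonpos hgap]
    simp only [mem_univ, true_implies]
    refine forall_congr' fun i => ?_
    rw [ell_eq_zero_iff (div_pos (hq i) (hv i)), div_eq_one_iff_eq (hv i).ne', eq_comm]
end

section
/- Let S and Σ be real symmetric positive definite n×n matrices. Then log det(Σ) + tr(S Σ⁻¹) ≥ log det(S) + n, with equality if and only if Σ = S. In particular, Σ = S is the unique minimizer of D' over all real symmetric positive definite n×n matrices. -/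
/-!
Factor `A⁻¹ = Yᴴ Y` with `Y` invertible and put `B = Y S Yᴴ`, a positive definite matrix with
`tr B = tr (S A⁻¹)` and `log det B = log det S - log det A`. In terms of the eigenvalues `λᵢ > 0`
of `B`, the claimed inequality reads `∑ (λᵢ - 1 - log λᵢ) ≥ 0`, which holds termwise by
`log x ≤ x - 1`, with equality iff every `λᵢ = 1`, i.e. iff `B = 1`, i.e. iff `A = S`.
-/

open Matrix
open scoped ComplexOrder

namespace Matrix

variable {ι 𝕜 : Type*} [Fintype ι] [RCLike 𝕜]

theorem trace_mul_mul_conjTranspose {R : Type*} [CommRing R] [StarRing R] (Y S : Matrix ι ι R) :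
    (Y * S * Yᴴ).trace = (S * (Yᴴ * Y)).trace := by
  rw [trace_mul_cycle, trace_mul_comm (Yᴴ * Y)]

variable [DecidableEq ι]

theorem det_mul_mul_conjTranspose {R : Type*} [CommRing R] [StarRing R] (Y S : Matrix ι ι R) :
    (Y * S * Yᴴ).det = S.det * (Yᴴ * Y).det := by
  simp only [det_mul]; ring

theorem mul_mul_conjTranspose_eq_one_iff {R : Type*} [CommRing R] [StarRing R] {Y : Matrix ι ι R}
    (hY : IsUnit Y) (S : Matrix ι ι R) : Y * S * Yᴴ = 1 ↔ (Yᴴ * Y)⁻¹ = S := by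
  have hYdet : IsUnit Y.det := (isUnit_iff_isUnit_det Y).mp hY
  have hYHdet : IsUnit Yᴴ.det := (isUnit_iff_isUnit_det _).mp hY.star
  rw [Matrix.mul_inv_rev]
  constructor
  · intro h
    calc Y⁻¹ * Yᴴ⁻¹ = Y⁻¹ * (Y * S * Yᴴ) * Yᴴ⁻¹ := by rw [h, Matrix.mul_one]
      _ = S := by
        simp only [Matrix.mul_assoc, mul_nonsing_inv _ hYHdet, Matrix.mul_one]
        rw [← Matrix.mul_assoc, nonsing_inv_mul _ hYdet, Matrix.one_mul]
  · rintro rfl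
    rw [mul_nonsing_inv_cancel_left _ _ hYdet, nonsing_inv_mul _ hYHdet]

theorem IsHermitian.eq_one_of_eigenvalues_eq_one {A : Matrix ι ι 𝕜} (hA : A.IsHermitian)
    (h : hA.eigenvalues = 1) : A = 1 := by
  rw [hA.spectral_theorem, h]
  simp

theorem PosDef.exists_isUnit_eq_conjTranspose_mul_self {A : Matrix ι ι 𝕜} (hA : A.PosDef) :
    ∃ Y : Matrix ι ι 𝕜, IsUnit Y ∧ A = Yᴴ * Y := by
  open scoped MatrixOrder in
  exact CStarAlgebra.isStrictlyPositive_iff_eq_star_mul_self.mp hA.isStrictlyPositive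

theorem PosDef.trace_sub_log_det_sub_card_eq_sum {B : Matrix ι ι ℝ} (hB : B.PosDef) :
    B.trace - Real.log B.det - Fintype.card ι =
      ∑ i, (hB.1.eigenvalues i - 1 - Real.log (hB.1.eigenvalues i)) := by
  rw [hB.1.trace_eq_sum_eigenvalues, hB.1.det_eq_prod_eigenvalues]
  simp only [RCLike.ofReal_real_eq_id, id]
  rw [Real.log_prod fun i _ => (hB.eigenvalues_pos i).ne', Finset.sum_sub_distrib,
    Finset.sum_sub_distrib, Finset.sum_const, Finset.card_univ, nsmul_one]
  ring

theorem PosDef.log_det_add_card_le_trace {B : Matrix ι ι ℝ} (hB : B.PosDef) :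
    Real.log B.det + Fintype.card ι ≤ B.trace := by
  have hsum : 0 ≤ ∑ i, (hB.1.eigenvalues i - 1 - Real.log (hB.1.eigenvalues i)) :=
    Finset.sum_nonneg fun i _ => by
      linarith [Real.log_le_sub_one_of_pos (hB.eigenvalues_pos i)]
  linarith [hB.trace_sub_log_det_sub_card_eq_sum]

theorem PosDef.trace_eq_log_det_add_card_iff {B : Matrix ι ι ℝ} (hB : B.PosDef) :
    B.trace = Real.log B.det + Fintype.card ι ↔ B = 1 := by
  refine ⟨fun h => hB.1.eq_one_of_eigenvalues_eq_one ?_, by rintro rfl; simp⟩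
  have hgap (i : ι) : 0 ≤ hB.1.eigenvalues i - 1 - Real.log (hB.1.eigenvalues i) := by
    linarith [Real.log_le_sub_one_of_pos (hB.eigenvalues_pos i)]
  have hzero := (Finset.sum_eq_zero_iff_of_nonneg fun i _ => hgap i).mp
    (by linarith [hB.trace_sub_log_det_sub_card_eq_sum])
  funext i
  by_contra hne
  have := Real.log_lt_sub_one_of_pos (hB.eigenvalues_pos i) hne
  linarith [hzero i (Finset.mem_univ i)]

end Matrix

theorem stmt_13 {n : ℕ} (S A : Matrix (Fin n) (Fin n) ℝ)
    (hS : S.PosDef) (hA : A.PosDef) :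
    Real.log S.det + n ≤ Real.log A.det + (S * A⁻¹).trace ∧
    (Real.log A.det + (S * A⁻¹).trace = Real.log S.det + n ↔ A = S) := by
  obtain ⟨Y, hY, hAY⟩ := hA.inv.exists_isUnit_eq_conjTranspose_mul_self
  have hB : (Y * S * Yᴴ).PosDef := hY.posDef_star_right_conjugate_iff.mpr hS
  have htrace : (Y * S * Yᴴ).trace = (S * A⁻¹).trace := by
    rw [trace_mul_mul_conjTranspose, hAY]
  have hlogdet : Real.log (Y * S * Yᴴ).det = Real.log S.det - Real.log A.det := by
    rw [det_mul_mul_conjTranspose, ← hAY, det_nonsing_inv, Ring.inverse_eq_inv',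
      Real.log_mul hS.det_pos.ne' (inv_ne_zero hA.det_pos.ne'), Real.log_inv, sub_eq_add_neg]
  have hone : Y * S * Yᴴ = 1 ↔ A = S := by
    rw [mul_mul_conjTranspose_eq_one_iff hY, ← hAY,
      nonsing_inv_nonsing_inv A hA.det_pos.ne'.isUnit]
  have hcard : (Fintype.card (Fin n) : ℝ) = n := by simp
  refine ⟨by linarith [hB.log_det_add_card_le_trace], ?_⟩
  rw [← hone, ← hB.trace_eq_log_det_add_card_iff, htrace, hlogdet, hcard]
  constructor <;> intro h <;> linarith
end

section
/- Let μ be a probability measure on ℝ^n admitting a density p with respect to Lebesgue measure, with finite second moment, mean m* and covariance matrix Σ*, and assume Σ* is positive definite and D(p, g_{m*,Σ*}) < ∞. Then for every m ∈ ℝ^n and every real symmetric positive definite n×n matrix Σ, D(p, g_{m*,Σ*}) ≤ D(p, g_{m,Σ}); that is, (m*, Σ*) minimizes the Kullback–Leibler divergence from p to the Gaussian family. -/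
open Matrix MeasureTheory
open scoped ENNReal

noncomputable def gauss {n : ℕ} (m : Fin n → ℝ) (A : Matrix (Fin n) (Fin n) ℝ)
    (x : Fin n → ℝ) : ℝ :=
  (Real.sqrt ((2 * Real.pi) ^ n * A.det))⁻¹ *
    Real.exp (-((x - m) ⬝ᵥ A⁻¹ *ᵥ (x - m)) / 2)

open Classical in
/-- Kullback--Leibler divergence `D(p,h) = ∫ log(p(x)/h(x)) p(x) dx`, valued in `ℝ≥0∞`,
set to `∞` when the defining integral is not (Lebesgue-)integrable. -/
noncomputable def KL {n : ℕ} (p h : (Fin n → ℝ) → ℝ) : ℝ≥0∞ :=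
  if Integrable (fun x => Real.log (p x / h x) * p x) volume
  then ENNReal.ofReal (∫ x, Real.log (p x / h x) * p x)
  else ⊤

/-!
Write `g⋆` for the Gaussian with the moments `m⋆, Σ⋆` of `μ`. Pointwise,
`log (p / g_{m,A}) = log (p / g⋆) + log (g⋆ / g_{m,A})`, so
`D(p, g_{m,A}) = D(p, g⋆) + ∫ log (g⋆ / g_{m,A}) dμ`. The logarithm of a Gaussian density is a
quadratic polynomial, so the last integral only sees the first two moments of `μ` and equals
`(log det A - log det Σ⋆ + tr (A⁻¹ Σ⋆) - n + (m⋆ - m)ᵀ A⁻¹ (m⋆ - m)) / 2`, the divergence between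
the two Gaussians. It is nonnegative: applying `log λ ≤ λ - 1` to the eigenvalues of
`Σ⋆^{1/2} A⁻¹ Σ⋆^{1/2}` gives `log det Σ⋆ - log det A + n ≤ tr (A⁻¹ Σ⋆)`.
-/

open ProbabilityTheory

namespace Matrix

variable {ι : Type*} [Fintype ι]

lemma dotProduct_mulVec_self_eq_sum (B : Matrix ι ι ℝ) (v : ι → ℝ) :
    v ⬝ᵥ B *ᵥ v = ∑ i, ∑ j, B i j * (v i * v j) := by
  simp only [dotProduct, mulVec, Finset.mul_sum]
  exact Finset.sum_congr rfl fun i _ => Finset.sum_congr rfl fun j _ => by ring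

variable [DecidableEq ι]

lemma PosDef.log_det_le_trace_sub_card {M : Matrix ι ι ℝ} (hM : M.PosDef) :
    Real.log M.det ≤ M.trace - Fintype.card ι := by
  have hpos := hM.eigenvalues_pos
  rw [hM.1.det_eq_prod_eigenvalues, hM.1.trace_eq_sum_eigenvalues]
  simp only [RCLike.ofReal_real_eq_id, id]
  rw [Real.log_prod fun i _ => (hpos i).ne']
  calc ∑ i, Real.log (hM.1.eigenvalues i) ≤ ∑ i, (hM.1.eigenvalues i - 1) :=
        Finset.sum_le_sum fun i _ => Real.log_le_sub_one_of_pos (hpos i)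
    _ = _ := by simp [Finset.sum_sub_distrib]

open scoped MatrixOrder in
lemma PosDef.log_det_sub_log_det_add_card_le_trace {S A : Matrix ι ι ℝ} (hS : S.PosDef)
    (hA : A.PosDef) :
    Real.log S.det - Real.log A.det + Fintype.card ι ≤ (A⁻¹ * S).trace := by
  set R := CFC.sqrt S
  have hRR : R * R = S := CFC.sqrt_mul_sqrt_self S hS.posSemidef.nonneg
  have hRself : Rᴴ = R := (CFC.sqrt_nonneg S).posSemidef.1.eq
  have hdet : (R * A⁻¹ * R).det = S.det / A.det := by
    rw [det_mul, det_mul, ← hRR, det_mul, det_nonsing_inv, Ring.inverse_eq_inv]; ring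
  have hM : (R * A⁻¹ * R).PosDef := by
    refine (hRself ▸ hA.inv.posSemidef.mul_mul_conjTranspose_same R).posDef_iff_det_ne_zero.mpr ?_
    rw [hdet]; exact div_ne_zero hS.det_pos.ne' hA.det_pos.ne'
  have := hM.log_det_le_trace_sub_card
  rw [hdet, Real.log_div hS.det_pos.ne' hA.det_pos.ne', trace_mul_cycle, hRR,
    trace_mul_comm] at this
  linarith

end Matrix

section SecondMoments

lemma integral_sub_mul_sub {Ω : Type*} [MeasurableSpace Ω] {μ : Measure Ω}
    [IsProbabilityMeasure μ] {X Y : Ω → ℝ} (hX : MemLp X 2 μ) (hY : MemLp Y 2 μ) (a b : ℝ) :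
    ∫ ω, (X ω - a) * (Y ω - b) ∂μ = cov[X, Y; μ] + (μ[X] - a) * (μ[Y] - b) := by
  have hXa : MemLp (fun ω => X ω - a) 2 μ := hX.sub (memLp_const a)
  have hYb : MemLp (fun ω => Y ω - b) 2 μ := hY.sub (memLp_const b)
  have h := covariance_eq_sub hXa hYb
  rw [covariance_sub_const_left (hX.integrable one_le_two),
    covariance_sub_const_right (hY.integrable one_le_two),
    integral_sub (hX.integrable one_le_two) (integrable_const a),
    integral_sub (hY.integrable one_le_two) (integrable_const b)] at h
  simp only [integral_const, probReal_univ, one_smul, Pi.mul_apply] at h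
  linarith

variable {ι : Type*} {μ : Measure (ι → ℝ)}

noncomputable def covMatrix (μ : Measure (ι → ℝ)) : Matrix ι ι ℝ :=
  Matrix.of fun i j => cov[fun x => x i, fun x => x j; μ]

lemma covMatrix_transpose (μ : Measure (ι → ℝ)) : (covMatrix μ)ᵀ = covMatrix μ := by
  ext i j
  exact covariance_comm _ _

variable [Fintype ι]

lemma memLp_two_eval (hmom : Integrable (fun x => ‖x‖ ^ 2) μ) (i : ι) :
    MemLp (fun x => x i) 2 μ := by
  refine (memLp_two_iff_integrable_sq (measurable_pi_apply i).aestronglyMeasurable).mpr ?_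
  refine hmom.mono' ((measurable_pi_apply i).pow_const 2).aestronglyMeasurable
    (ae_of_all _ fun x => ?_)
  rw [Real.norm_eq_abs, abs_pow, ← Real.norm_eq_abs]
  exact pow_le_pow_left₀ (norm_nonneg _) (norm_le_pi_norm x i) 2

variable [IsProbabilityMeasure μ]

lemma integral_eval (hmom : Integrable (fun x => ‖x‖ ^ 2) μ) (i : ι) :
    (∫ x, x ∂μ) i = ∫ x, x i ∂μ :=
  eval_integral (fun i => (memLp_two_eval hmom i).integrable one_le_two) i

lemma integrable_sub_mul_sub_eval (hmom : Integrable (fun x => ‖x‖ ^ 2) μ) (i j : ι)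
    (a b : ℝ) : Integrable (fun x => (x i - a) * (x j - b)) μ :=
  ((memLp_two_eval hmom i).sub (memLp_const a)).integrable_mul
    ((memLp_two_eval hmom j).sub (memLp_const b))

lemma integrable_quadForm (hmom : Integrable (fun x => ‖x‖ ^ 2) μ) (B : Matrix ι ι ℝ)
    (c : ι → ℝ) : Integrable (fun x => (x - c) ⬝ᵥ B *ᵥ (x - c)) μ := by
  simp only [dotProduct_mulVec_self_eq_sum, Pi.sub_apply]
  exact integrable_finsetSum _ fun i _ => integrable_finsetSum _ fun j _ =>
    (integrable_sub_mul_sub_eval hmom i j _ _).const_mul _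

lemma integral_quadForm (hmom : Integrable (fun x => ‖x‖ ^ 2) μ) (B : Matrix ι ι ℝ)
    (c : ι → ℝ) :
    ∫ x, (x - c) ⬝ᵥ B *ᵥ (x - c) ∂μ =
      (B * covMatrix μ).trace + (∫ x, x ∂μ - c) ⬝ᵥ B *ᵥ (∫ x, x ∂μ - c) := by
  have hterm : ∀ i j, Integrable (fun x : ι → ℝ => B i j * ((x i - c i) * (x j - c j))) μ :=
    fun i j => (integrable_sub_mul_sub_eval hmom i j _ _).const_mul _
  simp only [dotProduct_mulVec_self_eq_sum, Pi.sub_apply, integral_eval hmom]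
  rw [integral_finsetSum _ fun i _ => integrable_finsetSum _ fun j _ => hterm i j, trace,
    ← Finset.sum_add_distrib]
  refine Finset.sum_congr rfl fun i _ => ?_
  rw [integral_finsetSum _ fun j _ => hterm i j, diag_apply, mul_apply,
    ← Finset.sum_add_distrib]
  refine Finset.sum_congr rfl fun j _ => ?_
  rw [integral_const_mul, integral_sub_mul_sub (memLp_two_eval hmom i) (memLp_two_eval hmom j),
    ← transpose_apply (covMatrix μ), covMatrix_transpose]
  simp only [covMatrix, of_apply]
  ring

end SecondMoments

section Gaussian

variable {n : ℕ}

lemma gauss_pos {A : Matrix (Fin n) (Fin n) ℝ} (hA : 0 < A.det) (m x : Fin n → ℝ) :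
    0 < gauss m A x := by
  unfold gauss
  have := Real.pi_pos
  positivity

lemma log_gauss {A : Matrix (Fin n) (Fin n) ℝ} (hA : 0 < A.det) (m x : Fin n → ℝ) :
    Real.log (gauss m A x) =
      -(n * Real.log (2 * Real.pi) + Real.log A.det) / 2 - (x - m) ⬝ᵥ A⁻¹ *ᵥ (x - m) / 2 := by
  have h2π : 0 < (2 * Real.pi) ^ n := by have := Real.pi_pos; positivity
  rw [gauss, Real.log_mul (by positivity) (Real.exp_ne_zero _), Real.log_inv, Real.log_exp,
    Real.log_sqrt (by positivity), Real.log_mul h2π.ne' hA.ne', Real.log_pow]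
  ring

lemma log_gauss_div_gauss {A₁ A₂ : Matrix (Fin n) (Fin n) ℝ} (hA₁ : 0 < A₁.det)
    (hA₂ : 0 < A₂.det) (m₁ m₂ x : Fin n → ℝ) :
    Real.log (gauss m₁ A₁ x / gauss m₂ A₂ x) =
      (Real.log A₂.det - Real.log A₁.det + (x - m₂) ⬝ᵥ A₂⁻¹ *ᵥ (x - m₂)
        - (x - m₁) ⬝ᵥ A₁⁻¹ *ᵥ (x - m₁)) / 2 := by
  rw [Real.log_div (gauss_pos hA₁ m₁ x).ne' (gauss_pos hA₂ m₂ x).ne', log_gauss hA₁,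
    log_gauss hA₂]
  ring

variable {μ : Measure (Fin n → ℝ)} [IsProbabilityMeasure μ]

lemma integrable_log_gauss_div_gauss (hmom : Integrable (fun x => ‖x‖ ^ 2) μ)
    {A₁ A₂ : Matrix (Fin n) (Fin n) ℝ} (hA₁ : 0 < A₁.det) (hA₂ : 0 < A₂.det)
    (m₁ m₂ : Fin n → ℝ) : Integrable (fun x => Real.log (gauss m₁ A₁ x / gauss m₂ A₂ x)) μ := by
  simp only [log_gauss_div_gauss hA₁ hA₂]
  exact (((integrable_const _).fun_add (integrable_quadForm hmom _ _)).sub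
    (integrable_quadForm hmom _ _)).div_const 2

lemma integral_log_gauss_div_gauss (hmom : Integrable (fun x => ‖x‖ ^ 2) μ)
    (hcov : (covMatrix μ).PosDef) {A : Matrix (Fin n) (Fin n) ℝ} (hA : 0 < A.det)
    (m : Fin n → ℝ) :
    ∫ x, Real.log (gauss (∫ x, x ∂μ) (covMatrix μ) x / gauss m A x) ∂μ =
      (Real.log A.det - Real.log (covMatrix μ).det + (A⁻¹ * covMatrix μ).trace - n
        + (∫ x, x ∂μ - m) ⬝ᵥ A⁻¹ *ᵥ (∫ x, x ∂μ - m)) / 2 := by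
  simp only [log_gauss_div_gauss hcov.det_pos hA]
  have hQ := integrable_quadForm (μ := μ) hmom
  rw [integral_div, integral_sub ((integrable_const _).fun_add (hQ _ _)) (hQ _ _),
    integral_add (integrable_const _) (hQ _ _), integral_const, integral_quadForm hmom,
    integral_quadForm hmom, nonsing_inv_mul _ (isUnit_iff_ne_zero.mpr hcov.det_pos.ne')]
  simp only [probReal_univ, one_smul, trace_one, Fintype.card_fin, sub_self, mulVec_zero,
    dotProduct_zero, add_zero]
  ring

lemma integral_log_gauss_div_gauss_nonneg (hmom : Integrable (fun x => ‖x‖ ^ 2) μ)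
    (hcov : (covMatrix μ).PosDef) {A : Matrix (Fin n) (Fin n) ℝ} (hA : A.PosDef)
    (m : Fin n → ℝ) :
    0 ≤ ∫ x, Real.log (gauss (∫ x, x ∂μ) (covMatrix μ) x / gauss m A x) ∂μ := by
  rw [integral_log_gauss_div_gauss hmom hcov hA.det_pos]
  have htrace := hcov.log_det_sub_log_det_add_card_le_trace hA
  have hquad := hA.inv.posSemidef.dotProduct_mulVec_nonneg (∫ x, x ∂μ - m)
  simp only [Fintype.card_fin, star_trivial] at htrace hquad
  linarith

end Gaussian

section Density

variable {α : Type*} [MeasurableSpace α] {ν : Measure α} {p : α → ℝ}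

lemma integral_withDensity_ofReal (hp0 : ∀ x, 0 ≤ p x) (hpmeas : Measurable p) (f : α → ℝ) :
    ∫ x, f x ∂ν.withDensity (fun x => ENNReal.ofReal (p x)) = ∫ x, f x * p x ∂ν := by
  rw [integral_withDensity_eq_integral_toReal_smul hpmeas.ennreal_ofReal
    (ae_of_all _ fun _ => ENNReal.ofReal_lt_top)]
  simp only [ENNReal.toReal_ofReal (hp0 _), smul_eq_mul, mul_comm]

lemma integrable_withDensity_ofReal_iff (hp0 : ∀ x, 0 ≤ p x) (hpmeas : Measurable p)
    {f : α → ℝ} :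
    Integrable f (ν.withDensity fun x => ENNReal.ofReal (p x)) ↔
      Integrable (fun x => f x * p x) ν := by
  rw [integrable_withDensity_iff_integrable_smul' hpmeas.ennreal_ofReal
    (ae_of_all _ fun _ => ENNReal.ofReal_lt_top)]
  simp only [ENNReal.toReal_ofReal (hp0 _), smul_eq_mul, mul_comm]

end Density

lemma log_div_mul_eq_add {p q₁ q₂ : ℝ} (hq₁ : q₁ ≠ 0) (hq₂ : q₂ ≠ 0) :
    Real.log (p / q₂) * p = Real.log (p / q₁) * p + Real.log (q₁ / q₂) * p := by
  rcases eq_or_ne p 0 with rfl | hp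
  · simp
  · rw [← add_mul, ← Real.log_mul (div_ne_zero hp hq₁) (div_ne_zero hq₁ hq₂),
      div_mul_div_cancel₀ hq₁]

lemma KL_le_KL_of_integral_nonneg {n : ℕ} {p h₁ h₂ : (Fin n → ℝ) → ℝ}
    (hh₁ : ∀ x, h₁ x ≠ 0) (hh₂ : ∀ x, h₂ x ≠ 0) (hfin : KL p h₁ ≠ ⊤)
    (hint : Integrable (fun x => Real.log (h₁ x / h₂ x) * p x))
    (hnonneg : 0 ≤ ∫ x, Real.log (h₁ x / h₂ x) * p x) :
    KL p h₁ ≤ KL p h₂ := by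
  have hint₁ : Integrable (fun x => Real.log (p x / h₁ x) * p x) := by
    by_contra h
    exact hfin (by rw [KL, if_neg h])
  have hsplit : (fun x => Real.log (p x / h₂ x) * p x) =
      fun x => Real.log (p x / h₁ x) * p x + Real.log (h₁ x / h₂ x) * p x :=
    funext fun x => log_div_mul_eq_add (hh₁ x) (hh₂ x)
  rw [KL, KL, if_pos hint₁, if_pos (hsplit ▸ hint₁.fun_add hint), hsplit,
    integral_add hint₁ hint]
  exact ENNReal.ofReal_le_ofReal (le_add_of_nonneg_right hnonneg)

theorem stmt_17 {n : ℕ} (p : (Fin n → ℝ) → ℝ) (hp0 : ∀ x, 0 ≤ p x)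
    (hpmeas : Measurable p)
    (μ : Measure (Fin n → ℝ))
    (hμ : μ = volume.withDensity fun x => ENNReal.ofReal (p x))
    [IsProbabilityMeasure μ]
    (hmom : Integrable (fun x => ‖x‖ ^ 2) μ)
    (mstar : Fin n → ℝ) (hm : mstar = ∫ x, x ∂μ)
    (Sstar : Matrix (Fin n) (Fin n) ℝ)
    (hS : Sstar = Matrix.of fun i j => ∫ x, (x i - mstar i) * (x j - mstar j) ∂μ)
    (hSpd : Sstar.PosDef)
    (hfin : KL p (gauss mstar Sstar) ≠ ⊤) :
    ∀ (m : Fin n → ℝ) (A : Matrix (Fin n) (Fin n) ℝ), A.PosDef →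
      KL p (gauss mstar Sstar) ≤ KL p (gauss m A) := by
  intro m A hA
  obtain rfl : Sstar = covMatrix μ := by
    ext i j
    simp only [hS, hm, covMatrix, covariance, of_apply, integral_eval hmom]
  subst hm
  refine KL_le_KL_of_integral_nonneg (fun x => (gauss_pos hSpd.det_pos _ x).ne')
    (fun x => (gauss_pos hA.det_pos _ x).ne') hfin ?_ ?_
  · rw [← integrable_withDensity_ofReal_iff hp0 hpmeas, ← hμ]
    exact integrable_log_gauss_div_gauss hmom hSpd.det_pos hA.det_pos _ _
  · rw [← integral_withDensity_ofReal hp0 hpmeas, ← hμ]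
    exact integral_log_gauss_div_gauss_nonneg hmom hSpd hA m
end
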